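/- arXiv:2102.02572 — 4 statements merged into one kernel-verified Lean document; each statement's English description precedes it below -/
import Mathlib

section
/- Let F, G be distribution functions and t₀ ∈ (0,1) with F(G⁻¹(t₀)) = t₀. Then t₀ is a generalized contact point between F⁻¹ and G⁻¹: either F⁻¹(t₀) = G⁻¹(t₀), or F⁻¹(t₀) < G⁻¹(t₀) ≤ F⁻¹(t₀+), where F⁻¹(t₀+) is the right limit of F⁻¹ at t₀. -/
open Set Filter MeasureTheory

/-- `quantile F t = inf {x | t ≤ F x}` is the (left-continuous) quantile function of `F`. -/
noncomputable def quantile (F : ℝ → ℝ) (t : ℝ) : ℝ := sInf {x | t ≤ F x}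

/-- `F` is a distribution function: nondecreasing, right-continuous, with limits
`0` at `-∞` and `1` at `+∞`. -/
def IsDistFun (F : ℝ → ℝ) : Prop :=
  Monotone F ∧ (∀ x, ContinuousWithinAt F (Set.Ici x) x) ∧
    Tendsto F atBot (nhds 0) ∧ Tendsto F atTop (nhds 1)

/-- `t` is a generalized contact point between the quantile functions of `F` and `G`. -/
noncomputable def ContactPoint (F G : ℝ → ℝ) (t : ℝ) : Prop :=
  quantile F t = quantile G t ∨
    (quantile F t < quantile G t ∧ quantile G t ≤ Function.rightLim (quantile F) t) ∨
    (quantile G t < quantile F t ∧ quantile F t ≤ Function.rightLim (quantile G) t)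

/-!
With `q = G⁻¹(t₀)` we have `F q = t₀`, so `q` is among the points defining `F⁻¹(t₀)` and
`F⁻¹(t₀) ≤ q`. For `t > t₀` every `x` with `F x ≥ t > F q` lies to the right of `q`, so
`q ≤ F⁻¹(t)`; letting `t ↓ t₀` gives `q ≤ F⁻¹(t₀+)`.
-/

lemma le_rightLim_of_monotoneOn {α β : Type*} [LinearOrder α] [TopologicalSpace α]
    [OrderTopology α] [DenselyOrdered α] [NoMaxOrder α] [ConditionallyCompleteLinearOrder β]
    [TopologicalSpace β] [OrderTopology β] {f : α → β} {a b : α} {c : β} (hab : a < b)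
    (hf : MonotoneOn f (Ioo a b)) (hc : ∀ t ∈ Ioo a b, c ≤ f t) :
    c ≤ Function.rightLim f a := by
  have hbdd : BddBelow (f '' Ioo a b) := ⟨c, forall_mem_image.2 hc⟩
  rw [rightLim_eq_of_tendsto (hf.tendsto_nhdsWithin_Ioo_right (nonempty_Ioo.2 hab) hbdd)]
  exact le_csInf ((nonempty_Ioo.2 hab).image f) (forall_mem_image.2 hc)

section Quantile

variable {F : ℝ → ℝ} {t x : ℝ}

lemma bddBelow_setOf_le_apply (hF : Tendsto F atBot (nhds 0)) (ht : 0 < t) :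
    BddBelow {x | t ≤ F x} := by
  obtain ⟨a, ha⟩ := eventually_atBot.1 ((tendsto_order.1 hF).2 t ht)
  exact ⟨a, fun x hx => le_of_not_ge fun hxa => (ha x hxa).not_ge hx⟩

lemma nonempty_setOf_le_apply (hF : Tendsto F atTop (nhds 1)) (ht : t < 1) :
    {x | t ≤ F x}.Nonempty :=
  (((tendsto_order.1 hF).1 t ht).exists).imp fun _ => le_of_lt

lemma quantile_le (hF : Tendsto F atBot (nhds 0)) (ht : 0 < t) (hx : t ≤ F x) :
    quantile F t ≤ x :=
  csInf_le (bddBelow_setOf_le_apply hF ht) hx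

lemma le_quantile (hF : Monotone F) (hF₁ : Tendsto F atTop (nhds 1)) (ht : t < 1)
    (hx : F x < t) : x ≤ quantile F t :=
  le_csInf (nonempty_setOf_le_apply hF₁ ht) fun _ hy => (hF.reflect_lt (hx.trans_le hy)).le

lemma monotoneOn_quantile (hF₀ : Tendsto F atBot (nhds 0)) (hF₁ : Tendsto F atTop (nhds 1)) :
    MonotoneOn (quantile F) (Ioo 0 1) := fun _ hs _ ht hst =>
  csInf_le_csInf (bddBelow_setOf_le_apply hF₀ hs.1) (nonempty_setOf_le_apply hF₁ ht.2)
    fun _ hx => hst.trans hx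

end Quantile

theorem contactPoint_of_FG_fixed_general (F G : ℝ → ℝ) (hF : IsDistFun F)
    (t₀ : ℝ) (ht₀ : t₀ ∈ Set.Ioo (0:ℝ) 1) (hfix : F (quantile G t₀) = t₀) :
    quantile F t₀ = quantile G t₀ ∨
      (quantile F t₀ < quantile G t₀ ∧
        quantile G t₀ ≤ Function.rightLim (quantile F) t₀) := by
  obtain ⟨hmono, -, hF₀, hF₁⟩ := hF
  have hle : quantile F t₀ ≤ quantile G t₀ := quantile_le hF₀ ht₀.1 hfix.ge
  have hright : ∀ t ∈ Ioo t₀ 1, quantile G t₀ ≤ quantile F t := fun t ht =>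
    le_quantile hmono hF₁ ht.2 (hfix.trans_lt ht.1)
  refine hle.eq_or_lt.imp id fun hlt => ⟨hlt, le_rightLim_of_monotoneOn ht₀.2 ?_ hright⟩
  exact (monotoneOn_quantile hF₀ hF₁).mono (Ioo_subset_Ioo_left ht₀.1.le)

/-- If `F(G⁻¹(t₀)) = t₀` then `t₀` is a generalized contact point between `F⁻¹` and
`G⁻¹`: either `F⁻¹(t₀) = G⁻¹(t₀)` or `F⁻¹(t₀) < G⁻¹(t₀) ≤ F⁻¹(t₀+)`. -/
theorem contactPoint_of_FG_fixed (F G : ℝ → ℝ) (hF : IsDistFun F) (hG : IsDistFun G)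
    (t₀ : ℝ) (ht₀ : t₀ ∈ Set.Ioo (0:ℝ) 1) (hfix : F (quantile G t₀) = t₀) :
    quantile F t₀ = quantile G t₀ ∨
      (quantile F t₀ < quantile G t₀ ∧
        quantile G t₀ ≤ Function.rightLim (quantile F) t₀) :=
  contactPoint_of_FG_fixed_general F G hF t₀ ht₀ hfix
end

section
/- Let F, G be distribution functions and t₀ ∈ (0,1). The virtual contact condition F_G(t₀) < t₀ ≤ F_G(t₀+) (where F_G = F∘G⁻¹ and F_G(t₀+) is the right limit) holds if and only if G⁻¹(t₀) < F⁻¹(t₀) ≤ G⁻¹(t₀+). -/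
open Set Filter MeasureTheory

open scoped Topology

/-!
On `(0, 1)` the quantile function is the lower adjoint of `F`: `F⁻¹(t) ≤ x ↔ t ≤ F x`.
Applied at `x = G⁻¹(t₀)` this turns `F_G(t₀) < t₀` into `G⁻¹(t₀) < F⁻¹(t₀)`. Since `G⁻¹` is
monotone on `(0, 1)` it approaches `G⁻¹(t₀+)` from above as `t ↓ t₀`, so right-continuity of `F`
gives `F_G(t₀+) = F(G⁻¹(t₀+))`, and the adjunction at `x = G⁻¹(t₀+)` handles the second half.
-/

namespace IsDistFun

variable {F : ℝ → ℝ} {t x : ℝ}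

lemma nonempty_setOf_le (hF : IsDistFun F) (ht : t < 1) : {x | t ≤ F x}.Nonempty := by
  obtain ⟨x, hx⟩ := (hF.2.2.2.eventually (eventually_gt_nhds ht)).exists
  exact ⟨x, hx.le⟩

lemma bddBelow_setOf_le (hF : IsDistFun F) (ht : 0 < t) : BddBelow {x | t ≤ F x} := by
  obtain ⟨y, hy⟩ := eventually_atBot.1 (hF.2.2.1.eventually (eventually_lt_nhds ht))
  exact ⟨y, fun x hx => le_of_not_gt fun hxy => (hy x hxy.le).not_ge hx⟩

lemma le_apply_quantile (hF : IsDistFun F) (ht : t < 1) : t ≤ F (quantile F t) := by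
  have h_above : ∀ y ∈ Ioi (quantile F t), t ≤ F y := fun y hy => by
    obtain ⟨x, hx, hxy⟩ := exists_lt_of_csInf_lt (hF.nonempty_setOf_le ht) hy
    exact hx.trans (hF.1 hxy.le)
  exact ge_of_tendsto ((hF.2.1 _).mono_left (nhdsWithin_mono _ Ioi_subset_Ici_self))
    (eventually_nhdsWithin_of_forall h_above)

lemma quantile_le_iff (hF : IsDistFun F) (ht : t ∈ Ioo 0 1) : quantile F t ≤ x ↔ t ≤ F x :=
  ⟨fun h => (hF.le_apply_quantile ht.2).trans (hF.1 h),
    fun h => csInf_le (hF.bddBelow_setOf_le ht.1) h⟩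

lemma monotoneOn_quantile (hF : IsDistFun F) : MonotoneOn (quantile F) (Ioo 0 1) :=
  fun _ hs _ hu hsu => (hF.quantile_le_iff hs).2 (hsu.trans (hF.le_apply_quantile hu.2))

lemma tendsto_quantile_nhdsGT (hF : IsDistFun F) (ht : t ∈ Ioo 0 1) :
    Tendsto (quantile F) (𝓝[>] t) (𝓝[≥] (Function.rightLim (quantile F) t)) := by
  have h_mono : MonotoneOn (quantile F) (Ioo t 1) :=
    hF.monotoneOn_quantile.mono (Ioo_subset_Ioo_left ht.1.le)
  have h_bdd : BddBelow (quantile F '' Ioo t 1) :=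
    ⟨quantile F t, forall_mem_image.2 fun u hu =>
      hF.monotoneOn_quantile ht ⟨ht.1.trans hu.1, hu.2⟩ hu.1.le⟩
  have h_tendsto := h_mono.tendsto_nhdsWithin_Ioo_right (nonempty_Ioo.2 ht.2) h_bdd
  rw [rightLim_eq_of_tendsto h_tendsto]
  refine tendsto_nhdsWithin_iff.2 ⟨h_tendsto, ?_⟩
  filter_upwards [Ioo_mem_nhdsGT ht.2] with u hu
  exact csInf_le h_bdd (mem_image_of_mem _ hu)

lemma rightLim_comp_quantile {G : ℝ → ℝ} (hF : ∀ x, ContinuousWithinAt F (Ici x) x)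
    (hG : IsDistFun G) (ht : t ∈ Ioo 0 1) :
    Function.rightLim (fun s => F (quantile G s)) t =
      F (Function.rightLim (quantile G) t) :=
  rightLim_eq_of_tendsto ((hF _).tendsto.comp (hG.tendsto_quantile_nhdsGT ht))

end IsDistFun

/-- The virtual contact condition `F_G(t₀) < t₀ ≤ F_G(t₀+)` holds iff
`G⁻¹(t₀) < F⁻¹(t₀) ≤ G⁻¹(t₀+)`. -/
theorem virtual_contact_iff (F G : ℝ → ℝ) (hF : IsDistFun F) (hG : IsDistFun G)
    (t₀ : ℝ) (ht₀ : t₀ ∈ Set.Ioo (0:ℝ) 1) :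
    (F (quantile G t₀) < t₀ ∧
        t₀ ≤ Function.rightLim (fun s => F (quantile G s)) t₀) ↔
      (quantile G t₀ < quantile F t₀ ∧
        quantile F t₀ ≤ Function.rightLim (quantile G) t₀) := by
  rw [IsDistFun.rightLim_comp_quantile hF.2.1 hG ht₀]
  refine and_congr ?_ (hF.quantile_le_iff ht₀).symm
  rw [lt_iff_not_ge, lt_iff_not_ge, hF.quantile_le_iff ht₀]
end

section
/- Let F, G be distribution functions with F⁻¹(t₀) = G⁻¹(t₀) for some t₀ ∈ (0,1), and suppose t₀ ∉ Im(F) ∪ Im(G). Then the set {t ∈ (0,1) : F⁻¹(t) = G⁻¹(t) = F⁻¹(t₀)} is a nondegenerate interval; in particular, the point x₀ = F⁻¹(t₀) is a common discontinuity point of F and G. -/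
open Set Filter MeasureTheory

lemma qset_nonempty {F : ℝ → ℝ} (hF : IsDistFun F) {t : ℝ} (ht : t < 1) :
    {x | t ≤ F x}.Nonempty := by
  have := hF.2.2.2.eventually (eventually_gt_nhds ht)
  rcases this.exists with ⟨x, hx⟩
  exact ⟨x, hx.le⟩

lemma qset_bddBelow {F : ℝ → ℝ} (hF : IsDistFun F) {t : ℝ} (ht : 0 < t) :
    BddBelow {x | t ≤ F x} := by
  have := (hF.2.2.1.eventually (eventually_lt_nhds ht)).exists
  rcases this with ⟨b, hb⟩
  refine ⟨b, fun x hx => ?_⟩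
  by_contra h
  push_neg at h
  exact absurd (hx.trans (hF.1 h.le)) (not_le.2 hb)

lemma quantile_mono {F : ℝ → ℝ} (hF : IsDistFun F) {s t : ℝ} (hs : 0 < s) (ht : t < 1)
    (hst : s ≤ t) : quantile F s ≤ quantile F t :=
  csInf_le_csInf (qset_bddBelow hF hs) (qset_nonempty hF ht) (fun _ hx => hst.trans hx)

lemma le_F_quantile {F : ℝ → ℝ} (hF : IsDistFun F) {t : ℝ} (_ht : 0 < t) (ht1 : t < 1) :
    t ≤ F (quantile F t) := by
  set x₀ := quantile F t with hx₀
  have hne := qset_nonempty hF ht1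
  have htend : Tendsto F (nhdsWithin x₀ (Ioi x₀)) (nhds (F x₀)) :=
    (hF.2.1 x₀).mono_left (nhdsWithin_mono x₀ Ioi_subset_Ici_self)
  refine ge_of_tendsto htend ?_
  filter_upwards [self_mem_nhdsWithin] with x hx
  rcases exists_lt_of_csInf_lt hne hx with ⟨y, hy, hyx⟩
  exact hy.trans (hF.1 hyx.le)

lemma lt_F_of_not_mem {F : ℝ → ℝ} (hF : IsDistFun F) {t : ℝ} (ht : 0 < t) (ht1 : t < 1)
    (h : t ∉ Set.range F) : t < F (quantile F t) :=
  lt_of_le_of_ne (le_F_quantile hF ht ht1) (fun h' => h ⟨_, h'.symm⟩)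

lemma quantile_eq_of_between {F : ℝ → ℝ} (hF : IsDistFun F) {t₀ t : ℝ} (ht₀ : 0 < t₀)
    (ht1 : t < 1) (hle : t₀ ≤ t) (hub : t ≤ F (quantile F t₀)) :
    quantile F t = quantile F t₀ := by
  apply le_antisymm
  · exact csInf_le (qset_bddBelow hF (ht₀.trans_le hle)) hub
  · exact csInf_le_csInf (qset_bddBelow hF ht₀) (qset_nonempty hF ht1)
      (fun x hx => hle.trans hx)

lemma F_lt_of_lt_quantile {F : ℝ → ℝ} (hF : IsDistFun F) {t x : ℝ} (ht : 0 < t)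
    (hx : x < quantile F t) : F x < t := by
  by_contra h
  push_neg at h
  exact absurd (csInf_le (qset_bddBelow hF ht) (h : x ∈ {x | t ≤ F x})) (not_le.2 hx)

lemma not_continuousAt_quantile {F : ℝ → ℝ} (hF : IsDistFun F) {t : ℝ} (ht : 0 < t)
    (ht1 : t < 1) (h : t ∉ Set.range F) : ¬ ContinuousAt F (quantile F t) := by
  intro hc
  set x₀ := quantile F t
  have hlt : t < F x₀ := lt_F_of_not_mem hF ht ht1 h
  have htend : Tendsto F (nhdsWithin x₀ (Iio x₀)) (nhds (F x₀)) := hc.continuousWithinAt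
  have hle : F x₀ ≤ t := by
    refine le_of_tendsto htend ?_
    filter_upwards [self_mem_nhdsWithin] with x hx
    exact (F_lt_of_lt_quantile hF ht hx).le
  exact absurd hlt (not_lt.2 hle)

/-- If `F⁻¹(t₀) = G⁻¹(t₀)` and `t₀ ∉ Im(F) ∪ Im(G)`, then
`{t ∈ (0,1) : F⁻¹(t) = G⁻¹(t) = F⁻¹(t₀)}` is a nondegenerate interval; in particular
`x₀ = F⁻¹(t₀)` is a common discontinuity point of `F` and `G`. -/
theorem contact_interval_of_not_mem_ranges (F G : ℝ → ℝ)
    (hF : IsDistFun F) (hG : IsDistFun G)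
    (t₀ : ℝ) (ht₀ : t₀ ∈ Set.Ioo (0:ℝ) 1)
    (heq : quantile F t₀ = quantile G t₀)
    (hnot : t₀ ∉ Set.range F ∪ Set.range G) :
    (Set.OrdConnected {t ∈ Set.Ioo (0:ℝ) 1 |
        quantile F t = quantile F t₀ ∧ quantile G t = quantile F t₀} ∧
      ∃ s₁ ∈ {t ∈ Set.Ioo (0:ℝ) 1 |
          quantile F t = quantile F t₀ ∧ quantile G t = quantile F t₀},
        ∃ s₂ ∈ {t ∈ Set.Ioo (0:ℝ) 1 |
          quantile F t = quantile F t₀ ∧ quantile G t = quantile F t₀}, s₁ < s₂) ∧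
    ¬ ContinuousAt F (quantile F t₀) ∧ ¬ ContinuousAt G (quantile F t₀) := by
  obtain ⟨ht0, ht1⟩ := ht₀
  have hnotF : t₀ ∉ Set.range F := fun h => hnot (Or.inl h)
  have hnotG : t₀ ∉ Set.range G := fun h => hnot (Or.inr h)
  set x₀ := quantile F t₀ with hx₀def
  have hFx : t₀ < F x₀ := lt_F_of_not_mem hF ht0 ht1 hnotF
  have hGx : t₀ < G x₀ := by
    have := lt_F_of_not_mem hG ht0 ht1 hnotG
    rwa [← heq] at this
  -- membership criterion
  have hmem : ∀ t, 0 < t → t < 1 → t₀ ≤ t → t ≤ F x₀ → t ≤ G x₀ →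
      t ∈ {t ∈ Set.Ioo (0:ℝ) 1 |
        quantile F t = quantile F t₀ ∧ quantile G t = quantile F t₀} := by
    intro t h0 h1 hle hFb hGb
    refine ⟨⟨h0, h1⟩, quantile_eq_of_between hF ht0 h1 hle hFb, ?_⟩
    have : quantile G t = quantile G t₀ := by
      refine quantile_eq_of_between hG ht0 h1 hle ?_
      rwa [← heq]
    rw [this, ← heq]
  refine ⟨⟨⟨?_⟩, ?_⟩, ?_⟩
  · -- OrdConnected
    rintro a ⟨⟨ha0, ha1⟩, haF, haG⟩ b ⟨⟨hb0, hb1⟩, hbF, hbG⟩ u ⟨hau, hub⟩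
    have hu0 : 0 < u := ha0.trans_le hau
    have hu1 : u < 1 := lt_of_le_of_lt hub hb1
    refine ⟨⟨hu0, hu1⟩, ?_, ?_⟩
    · exact le_antisymm (hbF ▸ quantile_mono hF hu0 hb1 hub)
        (haF ▸ quantile_mono hF ha0 hu1 hau)
    · exact le_antisymm (hbG ▸ quantile_mono hG hu0 hb1 hub)
        (haG ▸ quantile_mono hG ha0 hu1 hau)
  · -- two points
    set m := min (min (F x₀) (G x₀)) 1 with hm
    have ht₀m : t₀ < m := lt_min (lt_min hFx hGx) ht1
    set s₂ := (t₀ + m) / 2 with hs₂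
    have h1 : s₂ < m := by rw [hs₂]; linarith
    have h2 : t₀ < s₂ := by rw [hs₂]; linarith
    have hmF : m ≤ F x₀ := (min_le_left _ _).trans (min_le_left _ _)
    have hmG : m ≤ G x₀ := (min_le_left _ _).trans (min_le_right _ _)
    have hm1 : m ≤ 1 := min_le_right _ _
    refine ⟨t₀, hmem t₀ ht0 ht1 le_rfl hFx.le hGx.le, s₂,
      hmem s₂ (ht0.trans h2) (h1.trans_le hm1) h2.le (h1.le.trans hmF)
        (h1.le.trans hmG), h2⟩
  · exact ⟨not_continuousAt_quantile hF ht0 ht1 hnotF, by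
      rw [heq]; exact not_continuousAt_quantile hG ht0 ht1 hnotG⟩
end

section
/- Let B be a standard Brownian bridge on [0,1] and A ⊂ [0,1] a Borel set. Then the random variable ℓ({t ∈ A : B(t) > 0}) is almost surely constant if and only if ℓ(A) = 0, where ℓ is Lebesgue measure. -/
/-!
If `L = ℓ {t ∈ A | B t > 0}` were a.s. constant, then `E[L · B m] = 0` since `B m` is centered.
By Fubini, `E[L · B m] = ∫_A E[B m ; B t > 0] dt`, and the integrand is positive for
`t, m ∈ (0, 1)`: as `x ↦ x⁺` is convex with subgradient `1_{x > 0}`,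
`δ · E[B m ; B t > 0] ≥ E[(B t)⁺] - E[(B t - δ B m)⁺]`, and for
`δ = Cov(B t, B m) / Var(B m)` the right-hand side is `κ (√Var(B t) - √Var(B t - δ B m)) > 0`
with `κ = E[N(0, 1)⁺]`. Hence `ℓ(A) = 0`.
-/

open Set Filter MeasureTheory ProbabilityTheory
open scoped NNReal

/-- `B` is a standard Brownian bridge on `[0,1]` under the probability measure `P`:
a measurable process with continuous paths on `[0,1]`, vanishing at `0` and `1`,
which is a centered Gaussian process with covariance `min s t - s * t` (expressed
through the law of finite linear combinations). -/
structure IsBrownianBridge {Ω : Type*} [MeasurableSpace Ω] (P : Measure Ω)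
    (B : Ω → ℝ → ℝ) : Prop where
  cont : ∀ ω, ContinuousOn (B ω) (Set.Icc 0 1)
  zero : ∀ ω, B ω 0 = 0 ∧ B ω 1 = 0
  meas : ∀ t, Measurable fun ω => B ω t
  gauss : ∀ (n : ℕ) (c : Fin n → ℝ) (t : Fin n → ℝ), (∀ i, t i ∈ Set.Icc (0:ℝ) 1) →
    P.map (fun ω => ∑ i, c i * B ω (t i)) =
      gaussianReal 0 (∑ i, ∑ j, c i * c j * (min (t i) (t j) - t i * t j)).toNNReal

lemma integrable_max_zero_gaussianReal (μ : ℝ) (v : ℝ≥0) :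
    Integrable (fun x ↦ max x 0) (gaussianReal μ v) :=
  ((memLp_id_gaussianReal 1).integrable le_rfl).pos_part

lemma integral_max_zero_gaussianReal (v : ℝ≥0) :
    ∫ x, max x 0 ∂gaussianReal 0 v = √v * ∫ x, max x 0 ∂gaussianReal 0 1 := by
  have hscale : (gaussianReal 0 1).map (√v * ·) = gaussianReal 0 v := by
    rw [gaussianReal_map_const_mul, mul_zero, mul_one]
    congr
    exact Real.sq_sqrt v.2
  rw [← hscale, integral_map (by fun_prop) (by fun_prop), ← integral_const_mul]
  simp_rw [mul_max_of_nonneg _ _ (Real.sqrt_nonneg _), mul_zero]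

lemma integral_max_zero_gaussianReal_one_pos : 0 < ∫ x, max x 0 ∂gaussianReal 0 1 := by
  have hsupport : Function.support (fun x : ℝ ↦ max x 0) = Ioi 0 := by
    ext x
    simp [lt_iff_le_and_ne]
  rw [integral_pos_iff_support_of_nonneg (fun x ↦ le_max_right x 0)
    (integrable_max_zero_gaussianReal 0 1), hsupport]
  refine pos_iff_ne_zero.2 fun h ↦ ?_
  simpa using gaussianReal_absolutelyContinuous' 0 one_ne_zero h

lemma integral_max_zero_gaussianReal_strictMono :
    StrictMono fun v : ℝ≥0 ↦ ∫ x, max x 0 ∂gaussianReal 0 v := by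
  intro w v h
  dsimp only
  rw [integral_max_zero_gaussianReal w, integral_max_zero_gaussianReal v]
  gcongr
  exact integral_max_zero_gaussianReal_one_pos

lemma integral_pos_of_ae_pos {α : Type*} [MeasurableSpace α] {μ : Measure α} {f : α → ℝ}
    (hf : Integrable f μ) (hpos : ∀ᵐ x ∂μ, 0 < f x) (hμ : μ ≠ 0) : 0 < ∫ x, f x ∂μ := by
  have hsupport : Function.support f =ᵐ[μ] univ :=
    ae_eq_univ.2 (ae_iff.1 (hpos.mono fun _ h ↦ h.ne'))
  rw [integral_pos_iff_support_of_nonneg_ae (hpos.mono fun _ h ↦ h.le) hf,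
    measure_congr hsupport]
  exact Measure.measure_univ_pos.2 hμ

lemma ae_restrict_mem_Ioo_of_subset_Icc {A : Set ℝ} {a b : ℝ} (hA : A ⊆ Icc a b) :
    ∀ᵐ t ∂volume.restrict A, t ∈ Ioo a b := by
  refine ae_mono (Measure.restrict_mono hA le_rfl) ?_
  rw [← Measure.restrict_congr_set Ioo_ae_eq_Icc]
  exact ae_restrict_mem measurableSet_Ioo

section

variable {Ω : Type*} [MeasurableSpace Ω] {P : Measure Ω}

lemma ProbabilityTheory.HasLaw.integrable_comp {𝓧 E : Type*} [MeasurableSpace 𝓧]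
    [NormedAddCommGroup E] {X : Ω → 𝓧} {μ : Measure 𝓧} (hX : HasLaw X μ P) {f : 𝓧 → E}
    (hf : Integrable f μ) : Integrable (fun ω ↦ f (X ω)) P :=
  (hX.map_eq ▸ hf).comp_aemeasurable hX.aemeasurable

lemma integral_indicator_pos_of_integral_max_sub_lt {X Y : Ω → ℝ} {δ : ℝ} (hX : Measurable X)
    (hY : Integrable Y P) (hXpos : Integrable (fun ω ↦ max (X ω) 0) P)
    (hXYpos : Integrable (fun ω ↦ max (X ω - δ * Y ω) 0) P) (hδ : 0 < δ)
    (hlt : ∫ ω, max (X ω - δ * Y ω) 0 ∂P < ∫ ω, max (X ω) 0 ∂P) :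
    0 < ∫ ω, {ω | 0 < X ω}.indicator Y ω ∂P := by
  have hY' : Integrable ({ω | 0 < X ω}.indicator Y) P :=
    hY.indicator (measurableSet_lt measurable_const hX)
  have hsub : ∀ ω, max (X ω) 0 - δ * {ω | 0 < X ω}.indicator Y ω ≤ max (X ω - δ * Y ω) 0 := by
    intro ω
    by_cases h : 0 < X ω
    · simp [indicator_of_mem (show ω ∈ {ω | 0 < X ω} from h), max_eq_left h.le]
    · simp [indicator_of_notMem (show ω ∉ {ω | 0 < X ω} from h), max_eq_right (not_lt.1 h)]
  have hint : ∫ ω, max (X ω) 0 ∂P - δ * ∫ ω, {ω | 0 < X ω}.indicator Y ω ∂P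
      ≤ ∫ ω, max (X ω - δ * Y ω) 0 ∂P := by
    rw [← integral_const_mul, ← integral_sub hXpos (hY'.const_mul δ)]
    exact integral_mono (hXpos.sub (hY'.const_mul δ)) hXYpos hsub
  exact pos_of_mul_pos_right (by linarith) hδ.le

namespace IsBrownianBridge

variable {B : Ω → ℝ → ℝ}

lemma hasLaw_linComb (hB : IsBrownianBridge P B) {s t : ℝ} (hs : s ∈ Icc (0:ℝ) 1)
    (ht : t ∈ Icc (0:ℝ) 1) (a b : ℝ) :
    HasLaw (fun ω ↦ a * B ω s + b * B ω t)
      (gaussianReal 0 (a ^ 2 * (s - s * s) + 2 * a * b * (min s t - s * t)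
        + b ^ 2 * (t - t * t)).toNNReal) P where
  aemeasurable := (((hB.meas s).const_mul a).add ((hB.meas t).const_mul b)).aemeasurable
  map_eq := by
    have h := hB.gauss 2 ![a, b] ![s, t] (Fin.forall_fin_two.2 ⟨hs, ht⟩)
    simp only [Fin.sum_univ_two, Matrix.cons_val_zero, Matrix.cons_val_one] at h
    rw [h, min_self, min_self, min_comm t s]
    ring_nf

lemma hasLaw_eval (hB : IsBrownianBridge P B) {t : ℝ} (ht : t ∈ Icc (0:ℝ) 1) :
    HasLaw (fun ω ↦ B ω t) (gaussianReal 0 (t - t * t).toNNReal) P := by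
  simpa using hB.hasLaw_linComb ht ht 1 0

lemma integrable_eval (hB : IsBrownianBridge P B) {t : ℝ} (ht : t ∈ Icc (0:ℝ) 1) :
    Integrable (fun ω ↦ B ω t) P :=
  (hB.hasLaw_eval ht).integrable_comp (f := id) ((memLp_id_gaussianReal 1).integrable le_rfl)

lemma integral_eval (hB : IsBrownianBridge P B) {t : ℝ} (ht : t ∈ Icc (0:ℝ) 1) :
    ∫ ω, B ω t ∂P = 0 :=
  (hB.hasLaw_eval ht).integral_eq.trans integral_id_gaussianReal

lemma measurable_uncurry_projIcc (hB : IsBrownianBridge P B) :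
    Measurable fun p : Ω × ℝ ↦ B p.1 (projIcc 0 1 zero_le_one p.2) := by
  have : Measurable (Function.uncurry fun t ω ↦ B ω (projIcc (0:ℝ) 1 zero_le_one t)) :=
    measurable_uncurry_of_continuous_of_measurable
      (fun ω ↦ (hB.cont ω).comp_continuous (continuous_subtype_val.comp continuous_projIcc)
        fun t ↦ (projIcc 0 1 zero_le_one t).2)
      fun t ↦ hB.meas _
  exact this.comp measurable_swap

lemma integral_indicator_eval_pos (hB : IsBrownianBridge P B) {s t : ℝ} (hs : s ∈ Ioo (0:ℝ) 1)
    (ht : t ∈ Ioo (0:ℝ) 1) :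
    0 < ∫ ω, {ω | 0 < B ω s}.indicator (fun ω ↦ B ω t) ω ∂P := by
  have hvs : 0 < s - s * s := by nlinarith [hs.1, hs.2]
  have hvt : 0 < t - t * t := by nlinarith [ht.1, ht.2]
  have hc : 0 < min s t - s * t := by
    rcases le_total s t with h | h
    · rw [min_eq_left h]; nlinarith [hs.1, ht.2]
    · rw [min_eq_right h]; nlinarith [ht.1, hs.2]
  set c := min s t - s * t
  set δ := c / (t - t * t)
  have hX := hB.hasLaw_eval (Ioo_subset_Icc_self hs)
  have hXY : HasLaw (fun ω ↦ B ω s - δ * B ω t)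
      (gaussianReal 0 (s - s * s - c ^ 2 / (t - t * t)).toNNReal) P := by
    convert hB.hasLaw_linComb (Ioo_subset_Icc_self hs) (Ioo_subset_Icc_self ht) 1 (-δ)
      using 3 with ω
    · ring
    · simp only [δ, c]
      field_simp
      ring
  refine integral_indicator_pos_of_integral_max_sub_lt (hB.meas s)
    (hB.integrable_eval (Ioo_subset_Icc_self ht))
    (hX.integrable_comp (integrable_max_zero_gaussianReal _ _))
    (hXY.integrable_comp (integrable_max_zero_gaussianReal _ _)) (by positivity) ?_
  have hXint : ∫ ω, max (B ω s) 0 ∂P = _ := hX.integral_comp (f := (max · 0)) (by fun_prop)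
  have hXYint : ∫ ω, max (B ω s - δ * B ω t) 0 ∂P = _ :=
    hXY.integral_comp (f := (max · 0)) (by fun_prop)
  rw [hXint, hXYint]
  refine integral_max_zero_gaussianReal_strictMono ((Real.toNNReal_lt_toNNReal_iff hvs).2 ?_)
  have : 0 < c ^ 2 / (t - t * t) := by positivity
  linarith

lemma integral_occupation_mul_eval_pos [SFinite P] (hB : IsBrownianBridge P B)
    {A : Set ℝ} (hA1 : A ⊆ Icc 0 1) (hA0 : volume A ≠ 0) {m : ℝ} (hm : m ∈ Ioo (0:ℝ) 1) :
    0 < ∫ ω, (volume {t ∈ A | 0 < B ω t}).toReal * B ω m ∂P := by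
  have : IsFiniteMeasure (volume.restrict A) :=
    isFiniteMeasure_restrict.2 ((measure_mono hA1).trans_lt measure_Icc_lt_top).ne
  set S := {p : Ω × ℝ | 0 < B p.1 (projIcc 0 1 zero_le_one p.2)}
  have hS : MeasurableSet S := measurableSet_lt measurable_const hB.measurable_uncurry_projIcc
  set F := S.indicator fun p ↦ B p.1 m
  have hF : Integrable F (P.prod (volume.restrict A)) :=
    ((hB.integrable_eval (Ioo_subset_Icc_self hm)).comp_fst _).indicator hS
  have hsection : ∀ ω, ∫ t in A, F (ω, t) = (volume {t ∈ A | 0 < B ω t}).toReal * B ω m := by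
    intro ω
    change ∫ t in A, (Prod.mk ω ⁻¹' S).indicator (fun _ ↦ B ω m) t = _
    have hSω : MeasurableSet (Prod.mk ω ⁻¹' S) := hS.preimage measurable_prodMk_left
    rw [integral_indicator_const _ hSω, smul_eq_mul, measureReal_def,
      Measure.restrict_apply hSω]
    congr 3
    ext t
    simp only [mem_inter_iff, mem_preimage, mem_ofPred_eq]
    refine and_comm.trans (and_congr_right fun htA ↦ ?_)
    show 0 < B ω (projIcc 0 1 zero_le_one t) ↔ _
    rw [projIcc_of_mem _ (hA1 htA)]
  have hpos : ∀ᵐ t ∂volume.restrict A, 0 < ∫ ω, F (ω, t) ∂P := by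
    filter_upwards [ae_restrict_mem_Ioo_of_subset_Icc hA1] with t ht
    have hproj : (projIcc (0:ℝ) 1 zero_le_one t : ℝ) = t :=
      congrArg Subtype.val (projIcc_of_mem _ (Ioo_subset_Icc_self ht))
    have hslice : (fun ω ↦ F (ω, t)) = {ω | 0 < B ω t}.indicator (fun ω ↦ B ω m) := by
      ext ω
      simp only [F, S, indicator, mem_ofPred_eq, hproj]
    rw [hslice]
    exact hB.integral_indicator_eval_pos ht hm
  calc 0 < ∫ t in A, ∫ ω, F (ω, t) ∂P :=
        integral_pos_of_ae_pos hF.integral_prod_right hpos (by simpa using hA0)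
    _ = ∫ ω, (∫ t in A, F (ω, t)) ∂P :=
        (integral_integral_swap (f := fun ω t ↦ F (ω, t)) hF).symm
    _ = _ := by simp_rw [hsection]

end IsBrownianBridge

end

theorem brownianBridge_occupation_constant_iff_general {Ω : Type*} [MeasurableSpace Ω]
    (P : Measure Ω) [IsProbabilityMeasure P] (B : Ω → ℝ → ℝ)
    (hB : IsBrownianBridge P B)
    (A : Set ℝ) (hA1 : A ⊆ Set.Icc 0 1) :
    (∃ c : ENNReal, ∀ᵐ ω ∂P, volume {t ∈ A | 0 < B ω t} = c) ↔ volume A = 0 := by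
  refine ⟨fun ⟨c, hc⟩ ↦ ?_,
    fun h ↦ ⟨0, ae_of_all _ fun ω ↦ measure_mono_null (fun t ht ↦ ht.1) h⟩⟩
  by_contra hA0
  have hm : (1 / 2 : ℝ) ∈ Ioo 0 1 := by norm_num
  have hpos := hB.integral_occupation_mul_eval_pos hA1 hA0 hm
  have hzero : ∫ ω, (volume {t ∈ A | 0 < B ω t}).toReal * B ω (1 / 2) ∂P = 0 := by
    rw [integral_congr_ae (hc.mono fun ω hω ↦ by rw [hω]), integral_const_mul,
      hB.integral_eval (by norm_num), mul_zero]
  exact hpos.ne' hzero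

/-- For a Borel set `A ⊆ [0,1]`, the occupation time `ℓ {t ∈ A : B t > 0}` is almost
surely constant iff `ℓ(A) = 0`. -/
theorem brownianBridge_occupation_constant_iff {Ω : Type*} [MeasurableSpace Ω]
    (P : Measure Ω) [IsProbabilityMeasure P] (B : Ω → ℝ → ℝ)
    (hB : IsBrownianBridge P B)
    (A : Set ℝ) (hA : MeasurableSet A) (hA1 : A ⊆ Set.Icc 0 1) :
    (∃ c : ENNReal, ∀ᵐ ω ∂P, volume {t ∈ A | 0 < B ω t} = c) ↔ volume A = 0 :=
  brownianBridge_occupation_constant_iff_general P B hB A hA1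
end
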